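/- arXiv:2405.04193 — 2 statements merged into one kernel-verified Lean document; each statement's English description precedes it below -/
import Mathlib

section
/- (Theorem 1.) Let π^S be a positive probability vector on cells i : Fin T → Fin r that is permutation-invariant (π^S(i∘σ) = π^S(i) for all permutations σ), and let μ₁, …, μ_T ∈ ℝ. Consider the feasible set of positive probability vectors π satisfying (c4): ∑_{j ∈ A(i)} π(j) = ∑_{j ∈ A(i)} π^S(j) for every cell i, and (c5): ∑_{cells i} u(i_t) π(i) = μ_t for t = 1, …, T. Suppose π* is a member of the feasible set for which there exist β : Fin T → ℝ and a permutation-invariant function ψ on cells such that F(π*(i)/π^S(i)) = ∑_{t=1}^T β_t u(i_t) + ψ(i) for all cells i. Then I(π* : π^S) ≤ I(π : π^S) for every π in the feasible set; i.e., the minimum of I(π : π^S) over the feasible set is attained at π*. -/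
/-!
The first-order condition of convexity: by the tangent-line inequality for `f`,
`I(π : π^S) ≥ I(π* : π^S) + ∑ᵢ F(π*(i)/π^S(i)) (π(i) - π*(i))`. With the stated form of
`F(π*(i)/π^S(i))` the correction term vanishes for every feasible `π`: the `β`-part is a
combination of the moments (c5), which `π` and `π*` share, and the `ψ`-part is constant on
orbits, on which `π` and `π*` have equal sums (c4).
-/

open Finset

/-- The orbit `A(i)` of a cell `i : Fin T → Fin r` under the action of the
symmetric group on `Fin T` permuting coordinates (`σ · i = i ∘ σ`). -/
def cellOrbit (r T : ℕ) (i : Fin T → Fin r) : Finset (Fin T → Fin r) :=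
  Finset.univ.filter (fun j => ∃ σ : Equiv.Perm (Fin T), j = i ∘ σ)

section Orbits

variable {r T : ℕ}

lemma mem_cellOrbit {i j : Fin T → Fin r} :
    j ∈ cellOrbit r T i ↔ ∃ σ : Equiv.Perm (Fin T), j = i ∘ σ := by
  simp [cellOrbit]

lemma mem_cellOrbit_self (i : Fin T → Fin r) : i ∈ cellOrbit r T i :=
  mem_cellOrbit.mpr ⟨1, rfl⟩

lemma cellOrbit_eq_of_mem {i j : Fin T → Fin r} (h : j ∈ cellOrbit r T i) :
    cellOrbit r T j = cellOrbit r T i := by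
  obtain ⟨σ, rfl⟩ := mem_cellOrbit.mp h
  ext k
  simp only [mem_cellOrbit]
  constructor
  · rintro ⟨τ, rfl⟩
    exact ⟨τ.trans σ, rfl⟩
  · rintro ⟨τ, rfl⟩
    exact ⟨τ.trans σ.symm, by ext; simp⟩

lemma cellOrbit_eq_iff_mem {i j : Fin T → Fin r} :
    cellOrbit r T j = cellOrbit r T i ↔ j ∈ cellOrbit r T i :=
  ⟨fun h => h ▸ mem_cellOrbit_self j, cellOrbit_eq_of_mem⟩

lemma filter_cellOrbit_eq (i : Fin T → Fin r) :
    univ.filter (fun j => cellOrbit r T j = cellOrbit r T i) = cellOrbit r T i := by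
  ext j
  simp [cellOrbit_eq_iff_mem]

end Orbits

lemma Finset.sum_mul_eq_zero_of_sum_fiber_eq_zero {α β R : Type*} [Fintype α] [DecidableEq β]
    [NonUnitalNonAssocSemiring R] (g : α → β) {h d : α → R}
    (hh : ∀ i j, g j = g i → h j = h i) (hd : ∀ i, ∑ j with g j = g i, d j = 0) :
    ∑ i, h i * d i = 0 := by
  rw [← sum_fiberwise_of_maps_to (t := univ.image g) (fun i _ => mem_image_of_mem g (mem_univ i))]
  refine sum_eq_zero fun b hb => ?_
  obtain ⟨i, -, rfl⟩ := mem_image.mp hb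
  calc ∑ j with g j = g i, h j * d j
      = ∑ j with g j = g i, h i * d j :=
        sum_congr rfl fun j hj => by rw [hh i j (mem_filter.mp hj).2]
    _ = 0 := by rw [← mul_sum, hd i, mul_zero]

lemma sum_mul_sub_eq_zero_of_perm_invariant {r T : ℕ} {ψ π ρ : (Fin T → Fin r) → ℝ}
    (hψ : ∀ (i : Fin T → Fin r) (σ : Equiv.Perm (Fin T)), ψ (i ∘ σ) = ψ i)
    (hπρ : ∀ i, ∑ j ∈ cellOrbit r T i, π j = ∑ j ∈ cellOrbit r T i, ρ j) :
    ∑ i, ψ i * (π i - ρ i) = 0 := by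
  refine sum_mul_eq_zero_of_sum_fiber_eq_zero (cellOrbit r T) (fun i j hij => ?_) fun i => ?_
  · obtain ⟨σ, rfl⟩ := mem_cellOrbit.mp (cellOrbit_eq_iff_mem.mp hij)
    exact hψ i σ
  · rw [filter_cellOrbit_eq, sum_sub_distrib, hπρ, sub_self]

lemma sum_linearCombination_mul_sub_eq_zero {ι κ : Type*} [Fintype ι] [Fintype κ]
    {g : κ → ι → ℝ} {π ρ : ι → ℝ} (hπρ : ∀ t, ∑ i, g t i * π i = ∑ i, g t i * ρ i)
    (β : κ → ℝ) :
    ∑ i, (∑ t, β t * g t i) * (π i - ρ i) = 0 := by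
  simp_rw [sum_mul, mul_assoc]
  rw [sum_comm]
  refine sum_eq_zero fun t _ => ?_
  simp_rw [← mul_sum, mul_sub, sum_sub_distrib, hπρ, sub_self, mul_zero]

lemma ConvexOn.add_deriv_mul_sub_le {S : Set ℝ} {f : ℝ → ℝ} (hf : ConvexOn ℝ S f) {x y : ℝ}
    (hx : x ∈ S) (hy : y ∈ S) (hfx : DifferentiableAt ℝ f x) :
    f x + deriv f x * (y - x) ≤ f y := by
  rcases lt_trichotomy x y with hxy | rfl | hxy
  · have h := hf.deriv_le_slope hx hy hxy hfx
    rw [slope_def_field, le_div_iff₀ (sub_pos.2 hxy)] at h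
    linarith
  · simp
  · have h := hf.slope_le_deriv hy hx hxy hfx
    rw [slope_def_field, div_le_iff₀ (sub_pos.2 hxy)] at h
    linarith

noncomputable def fDivergence {ι : Type*} [Fintype ι] (f : ℝ → ℝ) (π q : ι → ℝ) : ℝ :=
  ∑ i, q i * f (π i / q i)

lemma fDivergence_add_sum_deriv_mul_sub_le {ι : Type*} [Fintype ι] {f : ℝ → ℝ}
    (hf : ConvexOn ℝ (Set.Ioi 0) f) {π ρ q : ι → ℝ} (hq : ∀ i, 0 < q i) (hπ : ∀ i, 0 < π i)
    (hρ : ∀ i, 0 < ρ i) (hfρ : ∀ i, DifferentiableAt ℝ f (ρ i / q i)) :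
    fDivergence f ρ q + ∑ i, deriv f (ρ i / q i) * (π i - ρ i) ≤ fDivergence f π q := by
  rw [fDivergence, fDivergence, ← sum_add_distrib]
  refine sum_le_sum fun i _ => ?_
  have htangent := hf.add_deriv_mul_sub_le (div_pos (hρ i) (hq i)) (div_pos (hπ i) (hq i)) (hfρ i)
  have hscale : q i * (π i / q i - ρ i / q i) = π i - ρ i := by
    field_simp [(hq i).ne']
  calc q i * f (ρ i / q i) + deriv f (ρ i / q i) * (π i - ρ i)
      = q i * (f (ρ i / q i) + deriv f (ρ i / q i) * (π i / q i - ρ i / q i)) := by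
        rw [← hscale]; ring
    _ ≤ q i * f (π i / q i) := mul_le_mul_of_nonneg_left htangent (hq i).le

/-- Theorem 1: if a feasible `π*` (satisfying the orbit-sum restrictions (c4) and the
marginal moment restrictions (c5)) has the form
`F(π*(i)/π^S(i)) = ∑_t β_t u(i_t) + ψ(i)` for `F = f′` and a permutation-invariant `ψ`,
then `π*` minimizes the `f`-divergence `I(π : π^S)` over the feasible set. -/
theorem fdivergence_min_general_T
    (r T : ℕ)
    (u : Fin r → ℝ)
    (f : ℝ → ℝ) (hconv : StrictConvexOn ℝ (Set.Ioi 0) f)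
    (hdiff : ∀ x ∈ Set.Ioi (0 : ℝ), DifferentiableAt ℝ f x)
    (F : ℝ → ℝ) (hF : F = deriv f)
    (piS : (Fin T → Fin r) → ℝ)
    (hpiSpos : ∀ i, 0 < piS i)
    (μ : Fin T → ℝ)
    (πstar : (Fin T → Fin r) → ℝ)
    -- π* belongs to the feasible set:
    (hstarpos : ∀ i, 0 < πstar i)
    (hstarc4 : ∀ i, ∑ j ∈ cellOrbit r T i, πstar j = ∑ j ∈ cellOrbit r T i, piS j)
    (hstarc5 : ∀ t : Fin T, ∑ i, u (i t) * πstar i = μ t)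
    -- π* has the stated form:
    (β : Fin T → ℝ) (ψ : (Fin T → Fin r) → ℝ)
    (hψ : ∀ (i : Fin T → Fin r) (σ : Equiv.Perm (Fin T)), ψ (i ∘ σ) = ψ i)
    (hform : ∀ i : Fin T → Fin r,
      F (πstar i / piS i) = (∑ t, β t * u (i t)) + ψ i) :
    -- then π* minimizes I(π : π^S) over the feasible set
    ∀ π : (Fin T → Fin r) → ℝ,
      (∀ i, 0 < π i) → (∑ i, π i = 1) →
      (∀ i, ∑ j ∈ cellOrbit r T i, π j = ∑ j ∈ cellOrbit r T i, piS j) →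
      (∀ t : Fin T, ∑ i, u (i t) * π i = μ t) →
      (∑ i, piS i * f (πstar i / piS i)) ≤ ∑ i, piS i * f (π i / piS i) := by
  intro π hπpos _ hπc4 hπc5
  have htangent := fDivergence_add_sum_deriv_mul_sub_le hconv.convexOn hpiSpos hπpos hstarpos
    fun i => hdiff _ (div_pos (hstarpos i) (hpiSpos i))
  have hcorrection : ∑ i, deriv f (πstar i / piS i) * (π i - πstar i) = 0 := by
    simp_rw [← hF, hform, add_mul, sum_add_distrib]
    rw [sum_linearCombination_mul_sub_eq_zero (g := fun t (i : Fin T → Fin r) => u (i t))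
        (fun t => (hπc5 t).trans (hstarc5 t).symm) β,
      sum_mul_sub_eq_zero_of_perm_invariant hψ fun i => (hπc4 i).trans (hstarc4 i).symm,
      add_zero]
  rwa [hcorrection, add_zero] at htangent
end

section
/- Let T = 3 and suppose a positive probability vector π on cells (i,j,k) ∈ (Fin r)³ satisfies the OQS[f] model with f(x) = (1−x)² and parameters β₁, β₂ and β₃ = 0. Then for all i, j, k: (1) π^c(i,j,k) − π^c(k,j,i) = (u(i) − u(k)) β₁ / (2 · #A((i,j,k))); (2) π^c(i,j,k) − π^c(i,k,j) = (u(j) − u(k)) β₂ / (2 · #A((i,j,k))); (3) π^c(i,j,k) − π^c(j,i,k) = (u(i) − u(j)) (β₁ − β₂) / (2 · #A((i,j,k))). -/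
/-- The orbit `A((i,j,k))` of a cell of an `r³` table: all coordinate permutations. -/
def A3 {r : ℕ} (c : Fin r × Fin r × Fin r) : Finset (Fin r × Fin r × Fin r) :=
  {(c.1, c.2.1, c.2.2), (c.1, c.2.2, c.2.1), (c.2.1, c.1, c.2.2),
   (c.2.1, c.2.2, c.1), (c.2.2, c.1, c.2.1), (c.2.2, c.2.1, c.1)}

/-- The orbit average `π^S(i,j,k) = (1/#A((i,j,k))) ∑_{(s,t,u) ∈ A((i,j,k))} π(s,t,u)`. -/
noncomputable def orbitAvg3 {r : ℕ} (π : Fin r × Fin r × Fin r → ℝ)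
    (c : Fin r × Fin r × Fin r) : ℝ :=
  (∑ p ∈ A3 c, π p) / ((A3 c).card : ℝ)

/-- The conditional probability `π^c(i,j,k) = π(i,j,k) / ∑_{(s,t,u) ∈ A((i,j,k))} π(s,t,u)`. -/
noncomputable def condProb3 {r : ℕ} (π : Fin r × Fin r × Fin r → ℝ)
    (c : Fin r × Fin r × Fin r) : ℝ :=
  π c / (∑ p ∈ A3 c, π p)

/-!
Since `π^S = (∑_A π) / #A`, the ratio `π / π^S` equals `#A · π^c`. For the Pearson
divergence `F(x) = 2x − 2` is affine, so the model expresses each conditional probability as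
`π^c(p) = (2 + β₁ u(p₁) + β₂ u(p₂) + ψ) / (2 #A)`. On an orbit `ψ` and `#A` are constant,
so the difference of two conditional probabilities keeps only the score terms.
-/

lemma deriv_one_sub_sq (x : ℝ) : deriv (fun x : ℝ => (1 - x) ^ 2) x = 2 * x - 2 := by
  rw [(((hasDerivAt_id' x).const_sub 1).fun_pow 2).deriv]
  ring

section Orbit

variable {r : ℕ}

lemma mem_A3_self (c : Fin r × Fin r × Fin r) : c ∈ A3 c := by
  simp [A3]

lemma A3_eq_of_mem {c p : Fin r × Fin r × Fin r} (hp : p ∈ A3 c) : A3 p = A3 c := by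
  obtain ⟨i, j, k⟩ := c
  simp only [A3, Finset.mem_insert, Finset.mem_singleton] at hp
  rcases hp with rfl | rfl | rfl | rfl | rfl | rfl <;> ext q <;>
    simp only [A3, Finset.mem_insert, Finset.mem_singleton] <;> tauto

lemma div_orbitAvg3 (π : Fin r × Fin r × Fin r → ℝ) (c : Fin r × Fin r × Fin r) :
    π c / orbitAvg3 π c = (A3 c).card * condProb3 π c := by
  rw [orbitAvg3, condProb3, div_div_eq_mul_div, mul_div_assoc', mul_comm]

lemma condProb3_eq_of_pearson {π ψ η : Fin r × Fin r × Fin r → ℝ}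
    (hψ : ∀ c, ∀ p ∈ A3 c, ψ p = ψ c)
    (hmodel : ∀ p, 2 * (π p / orbitAvg3 π p) - 2 = η p + ψ p)
    {c p : Fin r × Fin r × Fin r} (hp : p ∈ A3 c) :
    condProb3 π p = (η p + ψ c + 2) / (2 * (A3 c).card) := by
  have hcard : ((A3 c).card : ℝ) ≠ 0 :=
    Nat.cast_ne_zero.mpr (Finset.card_ne_zero_of_mem (mem_A3_self c))
  have h := hmodel p
  rw [div_orbitAvg3, A3_eq_of_mem hp, hψ c p hp] at h
  rw [eq_div_iff (mul_ne_zero two_ne_zero hcard)]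
  linarith

end Orbit

/-- Under the Pearsonian OQS model (OQS[f] with `f(x) = (1−x)²`, parameters `β₁, β₂`
and `β₃ = 0`), the differences of conditional probabilities between permuted cells
have the stated linear structure. -/
theorem POQS_condProb_differences
    (r : ℕ)
    (u : Fin r → ℝ)
    (π : Fin r × Fin r × Fin r → ℝ)
    (β₁ β₂ β₃ : ℝ) (hβ₃ : β₃ = 0)
    (ψ : Fin r × Fin r × Fin r → ℝ) (hψ : ∀ c, ∀ p ∈ A3 c, ψ p = ψ c)
    -- OQS[f] model with f(x) = (1 − x)² (so F = f′):
    (hform : ∀ i j k : Fin r,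
      deriv (fun x : ℝ => (1 - x) ^ 2) (π (i, j, k) / orbitAvg3 π (i, j, k)) =
        β₁ * u i + β₂ * u j + β₃ * u k + ψ (i, j, k)) :
    ∀ i j k : Fin r,
      (condProb3 π (i, j, k) - condProb3 π (k, j, i) =
        (u i - u k) * β₁ / (2 * ((A3 (i, j, k)).card : ℝ))) ∧
      (condProb3 π (i, j, k) - condProb3 π (i, k, j) =
        (u j - u k) * β₂ / (2 * ((A3 (i, j, k)).card : ℝ))) ∧
      (condProb3 π (i, j, k) - condProb3 π (j, i, k) =
        (u i - u j) * (β₁ - β₂) / (2 * ((A3 (i, j, k)).card : ℝ))) := by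
  intro i j k
  subst hβ₃
  have hmodel : ∀ p, 2 * (π p / orbitAvg3 π p) - 2 =
      (β₁ * u p.1 + β₂ * u p.2.1) + ψ p := fun ⟨a, b, c⟩ => by
    simpa [deriv_one_sub_sq] using hform a b c
  have hcond := fun p (hp : p ∈ A3 (i, j, k)) => condProb3_eq_of_pearson hψ hmodel hp
  refine ⟨?_, ?_, ?_⟩ <;>
    rw [hcond _ (mem_A3_self _), hcond _ (by simp [A3])] <;> ring
end
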